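/- arXiv:quant-ph/0305126 — 4 statements merged into one kernel-verified Lean document; each statement's English description precedes it below -/
import Mathlib

section
/- Let Λ be a measurable space and let Θ be a countable type equipped with the discrete σ-algebra. Let K be a map assigning to every probability measure π on Θ a probability measure K(π) on Λ, and suppose K is σ-affine: for every sequence (πₙ) of probability measures on Θ and every sequence (αₙ) of nonnegative reals with ∑ₙ αₙ = 1, one has K(∑ₙ αₙ·πₙ)(B) = ∑ₙ αₙ·K(πₙ)(B) for every measurable B ⊆ Λ. Then there exists a unique generalized observable κ on Θ with outcome space Λ such that K(π)(B) = ∫ κ(θ)(B) dπ(θ) for every probability measure π on Θ and every measurable B ⊆ Λ; moreover κ(θ) = K(δ_θ), where δ_θ is the Dirac measure at θ. (This is the paper's Theorem 1 in the case of a countable underlying set, where the affinity axiom makes the representation valid.) -/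
open MeasureTheory ProbabilityTheory
open scoped NNReal ENNReal

/-- **Theorem 1** (Loubenets) in the case of a countable underlying set `Θ` with the
discrete σ-algebra: a σ-affine assignment `K` of outcome probability laws to initial
information states is represented by a unique generalized observable (Markov kernel)
`κ`, and `κ θ = K (δ_θ)`. -/
theorem exists_unique_generalized_observable_of_sigma_affine
    {Θ Λ : Type*} [Countable Θ] [MeasurableSpace Θ] [MeasurableSpace Λ]
    (hdisc : ∀ s : Set Θ, MeasurableSet s)
    (K : Measure Θ → Measure Λ)
    (hK : ∀ π : Measure Θ, IsProbabilityMeasure π → IsProbabilityMeasure (K π))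
    (haff : ∀ (π : ℕ → Measure Θ) (α : ℕ → ℝ≥0),
      (∀ n, IsProbabilityMeasure (π n)) → (∑' n, α n) = 1 →
      ∀ B : Set Λ, MeasurableSet B →
        K (Measure.sum fun n => α n • π n) B = ∑' n, (α n : ℝ≥0∞) * K (π n) B) :
    ∃! κ : Kernel Θ Λ, IsMarkovKernel κ ∧
      (∀ θ : Θ, κ θ = K (Measure.dirac θ)) ∧
      ∀ π : Measure Θ, IsProbabilityMeasure π →
        ∀ B : Set Λ, MeasurableSet B → K π B = ∫⁻ θ, κ θ B ∂π := by
  classical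
  haveI : MeasurableSingletonClass Θ := ⟨fun _ => hdisc _⟩
  rcases isEmpty_or_nonempty Θ with hΘ | hΘ
  · refine ⟨0, ⟨⟨fun θ => isEmptyElim θ⟩, fun θ => isEmptyElim θ, fun π hπ => ?_⟩,
      fun κ' _ => ?_⟩
    · exfalso
      have h1 : π Set.univ = 1 := hπ.measure_univ
      rw [Set.univ_eq_empty_iff.mpr hΘ, measure_empty] at h1
      exact zero_ne_one h1
    · ext θ : 1
      exact isEmptyElim θ
  · obtain ⟨f, hf⟩ := exists_surjective_nat Θ
    set κ : Kernel Θ Λ := ⟨fun θ => K (Measure.dirac θ), fun _ _ => hdisc _⟩ with hκdef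
    have hκapp : ∀ θ, κ θ = K (Measure.dirac θ) := fun _ => rfl
    have hmk : IsMarkovKernel κ := ⟨fun θ => hK _ inferInstance⟩
    have main : ∀ π : Measure Θ, IsProbabilityMeasure π →
        ∀ B : Set Λ, MeasurableSet B → K π B = ∫⁻ θ, κ θ B ∂π := by
      intro π hπ B hB
      choose g hg using fun θ => hf θ
      have hginj : Function.Injective g := fun a b h => by rw [← hg a, ← hg b, h]
      set α : ℕ → ℝ≥0 := fun n => if n = g (f n) then (π {f n}).toNNReal else 0 with hα
      -- generic reindexing identity
      have key : ∀ c : Θ → ℝ≥0∞, ∑' n, (α n : ℝ≥0∞) * c (f n) = ∑' θ, π {θ} * c θ := by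
        intro c
        have hsupp : Function.support (fun n => (α n : ℝ≥0∞) * c (f n)) ⊆ Set.range g := by
          intro n hn
          by_contra hmem
          have : α n = 0 := by
            simp only [hα]
            rw [if_neg]
            intro h
            exact hmem ⟨f n, h.symm⟩
          simp [this] at hn
        have := hginj.tsum_eq hsupp
        rw [← this]
        refine tsum_congr fun θ => ?_
        have hfg : f (g θ) = θ := hg θ
        have : α (g θ) = (π {θ}).toNNReal := by
          simp [hα, hfg]
        rw [this, hfg, ENNReal.coe_toNNReal (measure_ne_top π _)]
      have hαsum1 : ∑' n, (α n : ℝ≥0∞) = 1 := by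
        have := key fun _ => 1
        simp only [mul_one] at this
        rw [this]
        have h1 : (Measure.sum fun a => π {a} • Measure.dirac a) Set.univ = π Set.univ := by
          rw [Measure.sum_smul_dirac]
        rw [Measure.sum_apply _ MeasurableSet.univ] at h1
        simpa [measure_univ] using h1
      have hαsum : (∑' n, α n) = 1 := by
        have hsummable : Summable α := by
          rw [← ENNReal.tsum_coe_ne_top_iff_summable, hαsum1]
          exact ENNReal.one_ne_top
        have : ((∑' n, α n : ℝ≥0) : ℝ≥0∞) = 1 := by
          rw [ENNReal.coe_tsum hsummable, hαsum1]
        exact_mod_cast this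
      have hπeq : Measure.sum (fun n => α n • Measure.dirac (f n)) = π := by
        conv_rhs => rw [← Measure.sum_smul_dirac π]
        ext s hs
        rw [Measure.sum_apply _ hs, Measure.sum_apply _ hs]
        simp only [Measure.smul_apply, smul_eq_mul]
        exact key fun θ => Measure.dirac θ s
      calc K π B = K (Measure.sum fun n => α n • Measure.dirac (f n)) B := by rw [hπeq]
        _ = ∑' n, (α n : ℝ≥0∞) * K (Measure.dirac (f n)) B :=
            haff _ α (fun n => inferInstance) hαsum B hB
        _ = ∑' θ, π {θ} * K (Measure.dirac θ) B := key fun θ => K (Measure.dirac θ) B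
        _ = ∫⁻ θ, κ θ B ∂π := by
            rw [lintegral_countable' fun θ => κ θ B]
            exact tsum_congr fun θ => by rw [hκapp, mul_comm]
    refine ⟨κ, ⟨hmk, hκapp, main⟩, ?_⟩
    rintro κ' ⟨_, hκ'app, _⟩
    ext θ : 1
    rw [hκ'app θ, hκapp θ]
end

section
/- Let V be a real Banach space and R ⊆ V a nonempty convex set. Assume: (1) there exists a continuous linear functional J on V with J(η) = 1 for all η ∈ R; (2) every u ∈ V admits a decomposition u = β₁·η₁ − β₂·η₂ with η₁, η₂ ∈ R and β₁, β₂ ≥ 0, and ‖u‖ equals the infimum of β₁ + β₂ over all such decompositions. Let g : R → ℝ satisfy 0 ≤ g(η) ≤ 1 for all η ∈ R and be affine, i.e., g(α·η₁ + (1−α)·η₂) = α·g(η₁) + (1−α)·g(η₂) for all η₁, η₂ ∈ R and α ∈ [0,1]. Then there exists a unique continuous linear functional Φ on V such that ‖Φ‖ ≤ 1 and Φ(η) = g(η) for all η ∈ R. (This is the representation underlying the paper's Proposition 4: an affine [0,1]-valued function on the mean information state space is the restriction of a unique continuous linear functional, i.e., of a linear generalized observable value.) -/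
open Set

/-- (Representation underlying Loubenets' Proposition 4) Let `V` be a real Banach space
and `R ⊆ V` a nonempty convex set lying in the affine hyperplane `{J = 1}` of a
continuous linear functional `J`, and norm-generating in the sense that every `u ∈ V`
decomposes as `u = β₁•η₁ − β₂•η₂` with `η₁, η₂ ∈ R`, `β₁, β₂ ≥ 0`, and
`‖u‖ = inf (β₁ + β₂)` over all such decompositions. Then every affine function
`g : R → [0,1]` is the restriction to `R` of a unique continuous linear functional `Φ`
with `‖Φ‖ ≤ 1`. -/
theorem affine_functional_extends_to_unique_continuous_linear
    {V : Type*} [NormedAddCommGroup V] [NormedSpace ℝ V] [CompleteSpace V]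
    (R : Set V) (hne : R.Nonempty) (hconv : Convex ℝ R)
    (J : V →L[ℝ] ℝ) (hJ : ∀ η ∈ R, J η = 1)
    (hdecomp : ∀ u : V, ∃ (β₁ β₂ : ℝ) (η₁ η₂ : V),
      η₁ ∈ R ∧ η₂ ∈ R ∧ 0 ≤ β₁ ∧ 0 ≤ β₂ ∧ u = β₁ • η₁ - β₂ • η₂)
    (hnorm : ∀ u : V, ‖u‖ = sInf {r : ℝ | ∃ (β₁ β₂ : ℝ) (η₁ η₂ : V),
      η₁ ∈ R ∧ η₂ ∈ R ∧ 0 ≤ β₁ ∧ 0 ≤ β₂ ∧ u = β₁ • η₁ - β₂ • η₂ ∧ r = β₁ + β₂})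
    (g : V → ℝ)
    (hg01 : ∀ η ∈ R, 0 ≤ g η ∧ g η ≤ 1)
    (hgaff : ∀ η₁ ∈ R, ∀ η₂ ∈ R, ∀ α : ℝ, 0 ≤ α → α ≤ 1 →
      g (α • η₁ + (1 - α) • η₂) = α * g η₁ + (1 - α) * g η₂) :
    ∃! Φ : V →L[ℝ] ℝ, ‖Φ‖ ≤ 1 ∧ ∀ η ∈ R, Φ η = g η := by
  classical
  obtain ⟨η₀, hη₀⟩ := hne
  -- Well-definedness of the candidate value on decompositions
  have key : ∀ β₁ β₂ γ₁ γ₂ : ℝ, ∀ η₁ η₂ ξ₁ ξ₂ : V,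
      η₁ ∈ R → η₂ ∈ R → ξ₁ ∈ R → ξ₂ ∈ R →
      0 ≤ β₁ → 0 ≤ β₂ → 0 ≤ γ₁ → 0 ≤ γ₂ →
      β₁ • η₁ - β₂ • η₂ = γ₁ • ξ₁ - γ₂ • ξ₂ →
      β₁ * g η₁ - β₂ * g η₂ = γ₁ * g ξ₁ - γ₂ * g ξ₂ := by
    intro β₁ β₂ γ₁ γ₂ η₁ η₂ ξ₁ ξ₂ hη₁ hη₂ hξ₁ hξ₂ hb₁ hb₂ hc₁ hc₂ heq
    have hsum : β₁ • η₁ + γ₂ • ξ₂ = γ₁ • ξ₁ + β₂ • η₂ := by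
      rw [sub_eq_sub_iff_add_eq_add] at heq
      linear_combination (norm := module) heq
    have hJsum : β₁ + γ₂ = γ₁ + β₂ := by
      have h := congrArg J hsum
      simpa [map_add, map_smul, smul_eq_mul, hJ _ hη₁, hJ _ hη₂, hJ _ hξ₁, hJ _ hξ₂] using h
    rcases eq_or_lt_of_le (by positivity : (0:ℝ) ≤ β₁ + γ₂) with h0 | hspos
    · have hb₁0 : β₁ = 0 := by linarith
      have hc₂0 : γ₂ = 0 := by linarith
      have hc₁0 : γ₁ = 0 := by linarith
      have hb₂0 : β₂ = 0 := by linarith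
      simp [hb₁0, hb₂0, hc₁0, hc₂0]
    · set s := β₁ + γ₂ with hsdef
      have hs' : s ≠ 0 := ne_of_gt hspos
      have hpt : (β₁/s) • η₁ + (γ₂/s) • ξ₂ = (γ₁/s) • ξ₁ + (β₂/s) • η₂ := by
        rw [div_eq_inv_mul, div_eq_inv_mul, div_eq_inv_mul, div_eq_inv_mul,
          ← smul_smul, ← smul_smul, ← smul_smul, ← smul_smul, ← smul_add, ← smul_add, hsum]
      have h1 : (1:ℝ) - β₁/s = γ₂/s := by
        field_simp; linarith
      have h2 : (1:ℝ) - γ₁/s = β₂/s := by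
        field_simp; linarith
      have e1 := hgaff η₁ hη₁ ξ₂ hξ₂ (β₁/s) (by positivity)
        (by rw [div_le_one hspos]; linarith)
      have e2 := hgaff ξ₁ hξ₁ η₂ hη₂ (γ₁/s) (by positivity)
        (by rw [div_le_one hspos]; linarith)
      rw [h1] at e1
      rw [h2] at e2
      have hval : β₁/s * g η₁ + γ₂/s * g ξ₂ = γ₁/s * g ξ₁ + β₂/s * g η₂ := by
        rw [← e1, ← e2, hpt]
      field_simp at hval
      linarith
  -- The defining predicate and the function F
  have hex : ∀ u : V, ∃ r : ℝ, ∃ β₁ β₂ η₁ η₂,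
      η₁ ∈ R ∧ η₂ ∈ R ∧ 0 ≤ β₁ ∧ 0 ≤ β₂ ∧ u = β₁ • η₁ - β₂ • η₂ ∧
        r = β₁ * g η₁ - β₂ * g η₂ := by
    intro u
    obtain ⟨β₁, β₂, η₁, η₂, h1, h2, h3, h4, h5⟩ := hdecomp u
    exact ⟨_, β₁, β₂, η₁, η₂, h1, h2, h3, h4, h5, rfl⟩
  set F : V → ℝ := fun u => Classical.choose (hex u) with hFdef
  have hFP : ∀ u, ∃ β₁ β₂ η₁ η₂,
      η₁ ∈ R ∧ η₂ ∈ R ∧ 0 ≤ β₁ ∧ 0 ≤ β₂ ∧ u = β₁ • η₁ - β₂ • η₂ ∧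
        F u = β₁ * g η₁ - β₂ * g η₂ := fun u => Classical.choose_spec (hex u)
  have huniq : ∀ u r, (∃ β₁ β₂ η₁ η₂,
      η₁ ∈ R ∧ η₂ ∈ R ∧ 0 ≤ β₁ ∧ 0 ≤ β₂ ∧ u = β₁ • η₁ - β₂ • η₂ ∧
        r = β₁ * g η₁ - β₂ * g η₂) → r = F u := by
    intro u r hr
    obtain ⟨β₁, β₂, η₁, η₂, h1, h2, h3, h4, h5, h6⟩ := hr
    obtain ⟨γ₁, γ₂, ξ₁, ξ₂, k1, k2, k3, k4, k5, k6⟩ := hFP u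
    rw [h6, k6]
    exact key β₁ β₂ γ₁ γ₂ η₁ η₂ ξ₁ ξ₂ h1 h2 k1 k2 h3 h4 k3 k4 (h5.symm.trans k5)
  -- combining two nonnegative scalings of points of R into one
  have comb : ∀ β γ : ℝ, ∀ η ξ : V, 0 ≤ β → 0 ≤ γ → η ∈ R → ξ ∈ R →
      ∃ δ ζ, 0 ≤ δ ∧ ζ ∈ R ∧ β • η + γ • ξ = δ • ζ ∧ β * g η + γ * g ξ = δ * g ζ := by
    intro β γ η ξ hβ hγ hη hξ
    rcases eq_or_lt_of_le (by positivity : (0:ℝ) ≤ β + γ) with h0 | hpos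
    · refine ⟨0, η₀, le_refl 0, hη₀, ?_, ?_⟩
      · simp [show β = 0 by linarith, show γ = 0 by linarith]
      · simp [show β = 0 by linarith, show γ = 0 by linarith]
    · have hδ : β + γ ≠ 0 := ne_of_gt hpos
      have hmem : (β/(β+γ)) • η + (γ/(β+γ)) • ξ ∈ R :=
        hconv hη hξ (by positivity) (by positivity) (by field_simp)
      refine ⟨β + γ, _, le_of_lt hpos, hmem, ?_, ?_⟩
      · rw [smul_add, smul_smul, smul_smul]
        rw [show (β+γ)*(β/(β+γ)) = β by field_simp, show (β+γ)*(γ/(β+γ)) = γ by field_simp]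
      · have h1 : (1:ℝ) - β/(β+γ) = γ/(β+γ) := by field_simp; ring
        have e := hgaff η hη ξ hξ (β/(β+γ)) (by positivity)
          (by rw [div_le_one hpos]; linarith)
        rw [h1] at e
        rw [e]
        field_simp
  have hadd : ∀ u v, F (u + v) = F u + F v := by
    intro u v
    obtain ⟨β₁, β₂, η₁, η₂, h1, h2, h3, h4, h5, h6⟩ := hFP u
    obtain ⟨γ₁, γ₂, ξ₁, ξ₂, k1, k2, k3, k4, k5, k6⟩ := hFP v
    obtain ⟨δ₁, ζ₁, d1, d2, d3, d4⟩ := comb β₁ γ₁ η₁ ξ₁ h3 k3 h1 k1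
    obtain ⟨δ₂, ζ₂, e1, e2, e3, e4⟩ := comb β₂ γ₂ η₂ ξ₂ h4 k4 h2 k2
    refine (huniq (u + v) (F u + F v)
      ⟨δ₁, δ₂, ζ₁, ζ₂, d2, e2, d1, e1, ?_, ?_⟩).symm
    · rw [h5, k5, ← d3, ← e3]; abel
    · rw [h6, k6, ← d4, ← e4]; ring
  have hsmul : ∀ (c : ℝ) (u : V), F (c • u) = c * F u := by
    intro c u
    obtain ⟨β₁, β₂, η₁, η₂, h1, h2, h3, h4, h5, h6⟩ := hFP u
    rcases le_or_gt 0 c with hc | hc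
    · refine (huniq (c • u) (c * F u)
        ⟨c*β₁, c*β₂, η₁, η₂, h1, h2, mul_nonneg hc h3, mul_nonneg hc h4, ?_, ?_⟩).symm
      · rw [h5, smul_sub, smul_smul, smul_smul]
      · rw [h6]; ring
    · refine (huniq (c • u) (c * F u)
        ⟨(-c)*β₂, (-c)*β₁, η₂, η₁, h2, h1, mul_nonneg (by linarith) h4,
          mul_nonneg (by linarith) h3, ?_, ?_⟩).symm
      · rw [h5]
        module
      · rw [h6]; ring
  have hbound : ∀ u : V, |F u| ≤ ‖u‖ := by
    intro u
    rw [hnorm u]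
    apply le_csInf
    · obtain ⟨β₁, β₂, η₁, η₂, h1, h2, h3, h4, h5⟩ := hdecomp u
      exact ⟨β₁+β₂, β₁, β₂, η₁, η₂, h1, h2, h3, h4, h5, rfl⟩
    · rintro r ⟨β₁, β₂, η₁, η₂, h1, h2, h3, h4, h5, rfl⟩
      have hv : F u = β₁ * g η₁ - β₂ * g η₂ :=
        (huniq u _ ⟨β₁, β₂, η₁, η₂, h1, h2, h3, h4, h5, rfl⟩).symm
      rw [hv]
      obtain ⟨hg1a, hg1b⟩ := hg01 η₁ h1
      obtain ⟨hg2a, hg2b⟩ := hg01 η₂ h2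
      rw [abs_le]
      constructor <;> nlinarith
  -- assemble the continuous linear functional
  let L : V →ₗ[ℝ] ℝ :=
    { toFun := F
      map_add' := hadd
      map_smul' := by intro c u; simpa using hsmul c u }
  let Φ : V →L[ℝ] ℝ := LinearMap.mkContinuous L 1 (by intro u; show ‖F u‖ ≤ 1 * ‖u‖; simpa using hbound u)
  have hΦF : ∀ u, Φ u = F u := fun u => rfl
  have hΦR : ∀ η ∈ R, Φ η = g η := by
    intro η hη
    rw [hΦF]
    exact (huniq η (g η) ⟨1, 0, η, η₀, hη, hη₀, zero_le_one, le_refl 0, by simp, by ring⟩).symm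
  refine ⟨Φ, ⟨LinearMap.mkContinuous_norm_le L zero_le_one _, hΦR⟩, ?_⟩
  rintro Ψ ⟨-, hΨ⟩
  ext u
  obtain ⟨β₁, β₂, η₁, η₂, h1, h2, h3, h4, h5⟩ := hdecomp u
  have hΨu : Ψ u = β₁ * g η₁ - β₂ * g η₂ := by
    rw [h5, map_sub, map_smul, map_smul, smul_eq_mul, smul_eq_mul, hΨ _ h1, hΨ _ h2]
  rw [hΨu, hΦF]
  exact huniq u _ ⟨β₁, β₂, η₁, η₂, h1, h2, h3, h4, h5, rfl⟩
end

section
/- Let H be a complex Hilbert space, b = (b_i)_{i ∈ ι} a Hilbert basis of H indexed by a type ι, and λ : ι → ℝ an injective function (the eigenvalue labelling of the projection-valued measure P(B) = ∑_{λ_i ∈ B} |b_i⟩⟨b_i|). Let ψ ∈ H with ‖ψ‖ = 1 and ω ∈ ℝ, and suppose that for every Borel set B ⊆ ℝ the Born probability is dispersion-free: ∑'_{i} (if λ(i) ∈ B then ‖⟨b_i, ψ⟩‖² else 0) = (if ω ∈ B then 1 else 0). Then there exist i₀ ∈ ι and c ∈ ℂ with λ(i₀) = ω, |c| = 1, and ψ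 = c · b_{i₀}. (This is the key step in the proof of the paper's Theorem 4, the no-go theorem: a hidden-variable relation χ_{φ⁻¹(B)}(θ) = tr{p_θ P(B)} forces each pure state p_θ to be an eigenstate of the projection-valued measure.) -/
open scoped InnerProductSpace Classical

/-- (Key step in the proof of Loubenets' Theorem 4, the no-go theorem) If the Born
probability distribution of a unit vector `ψ` for the discrete projection-valued
measure `P(B) = ∑_{lam i ∈ B} |b i⟩⟨b i|` (with `b` a Hilbert basis and `lam`
injective) is dispersion-free with value `ω`, then `ψ` is, up to a phase, the basis
vector `b i₀` with eigenvalue `lam i₀ = ω`. -/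
theorem eigenstate_of_dispersion_free
    {H : Type*} [NormedAddCommGroup H] [InnerProductSpace ℂ H] [CompleteSpace H]
    {ι : Type*} (b : HilbertBasis ι ℂ H) (lam : ι → ℝ) (hlam : Function.Injective lam)
    (ψ : H) (hψ : ‖ψ‖ = 1) (ω : ℝ)
    (hdf : ∀ B : Set ℝ, MeasurableSet B →
      (∑' i : ι, if lam i ∈ B then ‖⟪b i, ψ⟫_ℂ‖ ^ 2 else 0)
        = if ω ∈ B then (1 : ℝ) else 0) :
    ∃ (i₀ : ι) (c : ℂ), lam i₀ = ω ∧ ‖c‖ = 1 ∧ ψ = c • b i₀ := by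
  set f : ι → ℝ := fun i => ‖⟪b i, ψ⟫_ℂ‖ ^ 2 with hf
  -- summability of the squared coefficients
  have hsum : Summable f := by
    have h2 : (0:ℝ) < (2 : ENNReal).toReal := by norm_num
    have := (lp.memℓp (E := fun _ : ι => ℂ) (b.repr ψ)).summable h2
    simpa [hf, b.repr_apply_apply, ENNReal.toReal_ofNat,
      Real.rpow_natCast] using this
  -- apply dispersion-freeness to {ω}
  have h1 : (∑' i : ι, if lam i = ω then f i else 0) = 1 := by
    simpa using hdf {ω} (measurableSet_singleton ω)
  -- obtain i₀ with lam i₀ = ω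
  obtain ⟨i₀, hi₀⟩ : ∃ i₀, lam i₀ = ω := by
    by_contra h
    push_neg at h
    simp only [h, if_false, tsum_zero] at h1
    exact one_ne_zero h1.symm
  -- the singled-out coefficient has norm 1
  have hkey : ∀ i, (if lam i = ω then f i else 0) = (if i = i₀ then f i₀ else 0) := by
    intro i
    by_cases hi : i = i₀
    · simp [hi, hi₀]
    · have : lam i ≠ ω := fun h => hi (hlam (h.trans hi₀.symm))
      simp [hi, this]
  have hfi₀ : f i₀ = 1 := by
    rw [funext hkey, tsum_ite_eq] at h1
    exact h1
  -- coefficients away from i₀ vanish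
  have h0 : (∑' i : ι, if lam i ≠ ω then f i else 0) = 0 := by
    simpa using hdf {ω}ᶜ (measurableSet_singleton ω).compl
  have hzero : ∀ i, i ≠ i₀ → ⟪b i, ψ⟫_ℂ = 0 := by
    intro i hi
    have hsum' : Summable fun i => if lam i ≠ ω then f i else 0 := by
      apply hsum.of_nonneg_of_le
      · intro i; positivity
      · intro i
        by_cases h : lam i ≠ ω
        · rw [if_pos h]
        · rw [if_neg h]; positivity
    have hne : lam i ≠ ω := fun h => hi (hlam (h.trans hi₀.symm))
    have hle : (if lam i ≠ ω then f i else 0) ≤ 0 := by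
      exact (Summable.le_tsum hsum' i fun j _ => by positivity).trans_eq h0
    rw [if_pos hne] at hle
    have hge : 0 ≤ f i := by positivity
    have : f i = 0 := le_antisymm hle hge
    have : ‖⟪b i, ψ⟫_ℂ‖ = 0 := by
      have := sq_eq_zero_iff.mp this
      simpa using this
    simpa using this
  -- ψ = c • b i₀
  refine ⟨i₀, ⟪b i₀, ψ⟫_ℂ, hi₀, ?_, ?_⟩
  · have h1 : ‖⟪b i₀, ψ⟫_ℂ‖ ^ 2 = 1 := hfi₀
    nlinarith [norm_nonneg (⟪b i₀, ψ⟫_ℂ)]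
  · have hrepr := b.hasSum_repr ψ
    have heq : (fun i => b.repr ψ i • b i)
        = fun i => if i = i₀ then ⟪b i₀, ψ⟫_ℂ • b i₀ else 0 := by
      funext i
      by_cases hi : i = i₀
      · simp [hi, b.repr_apply_apply]
      · simp [hi, b.repr_apply_apply, hzero i hi]
    rw [heq] at hrepr
    exact hrepr.unique (hasSum_ite_eq i₀ _)
end

section
/- Let H be a complex Hilbert space, b = (b_i)_{i ∈ ι} a Hilbert basis of H, λ : ι → ℝ an injective function, and let i₁, i₂ ∈ ι with i₁ ≠ i₂. Set ψ = (√2)⁻¹ · (b_{i₁} + b_{i₂}). Then there exists no ω ∈ ℝ such that for every Borel set B ⊆ ℝ one has ∑'_{i} (if λ(i) ∈ B then ‖⟨b_i, ψ⟩‖² else 0) = (if ω ∈ B then 1 else 0). (This is the contradiction concluding the proof of the paper's Theorem 4: the quantum statistical model is not reducible to Kolmogorov's statistical model, since a superposition state admits no dispersion-free value assignment for a discrete projection-valued measure.) -/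
open scoped InnerProductSpace Classical

/-- (Contradiction concluding the proof of Loubenets' Theorem 4: the quantum statistical
model is not reducible to Kolmogorov's statistical model) The superposition
`ψ = (√2)⁻¹ • (b i₁ + b i₂)` of two distinct basis vectors of a Hilbert basis `b`
admits no dispersion-free value assignment `ω` for the discrete projection-valued
measure with eigenvectors `b i` and distinct eigenvalues `lam i`. -/
theorem no_dispersion_free_value_for_superposition
    {H : Type*} [NormedAddCommGroup H] [InnerProductSpace ℂ H] [CompleteSpace H]
    {ι : Type*} (b : HilbertBasis ι ℂ H) (lam : ι → ℝ) (hlam : Function.Injective lam)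
    (i₁ i₂ : ι) (hne : i₁ ≠ i₂) :
    ¬ ∃ ω : ℝ, ∀ B : Set ℝ, MeasurableSet B →
      (∑' i : ι, if lam i ∈ B
          then ‖⟪b i, (Real.sqrt 2)⁻¹ • (b i₁ + b i₂)⟫_ℂ‖ ^ 2 else 0)
        = if ω ∈ B then (1 : ℝ) else 0 := by
  rintro ⟨ω, hω⟩
  have hb := orthonormal_iff_ite.mp b.orthonormal
  have hω₁ := hω {lam i₁} (measurableSet_singleton _)
  have hsum : (∑' i : ι, if lam i ∈ ({lam i₁} : Set ℝ)
      then ‖⟪b i, (Real.sqrt 2)⁻¹ • (b i₁ + b i₂)⟫_ℂ‖ ^ 2 else 0)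
      = ‖⟪b i₁, (Real.sqrt 2)⁻¹ • (b i₁ + b i₂)⟫_ℂ‖ ^ 2 := by
    rw [tsum_eq_single i₁]
    · simp
    · intro j hj
      have : lam j ∉ ({lam i₁} : Set ℝ) := by
        simp only [Set.mem_singleton_iff]
        exact fun h => hj (hlam h)
      simp [this]
  have hinner : ‖⟪b i₁, (Real.sqrt 2)⁻¹ • (b i₁ + b i₂)⟫_ℂ‖ ^ 2 = 1/2 := by
    have hcoe : ((Real.sqrt 2)⁻¹ : ℝ) • (b i₁ + b i₂)
        = (((Real.sqrt 2)⁻¹ : ℝ) : ℂ) • (b i₁ + b i₂) := (Complex.coe_smul _ _).symm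
    rw [hcoe, inner_smul_right, inner_add_right, hb i₁ i₁, hb i₁ i₂]
    simp only [if_pos rfl, if_true, if_neg hne, add_zero, mul_one, Complex.norm_real]
    rw [Real.norm_eq_abs, abs_of_nonneg (by positivity : (0:ℝ) ≤ (Real.sqrt 2)⁻¹), ← Real.sqrt_inv,
      Real.sq_sqrt (by norm_num)]
    norm_num
  replace hω₁ : (1/2 : ℝ) = if ω ∈ ({lam i₁} : Set ℝ) then (1 : ℝ) else 0 := by
    rw [← hinner, ← hsum]; convert hω₁
  split_ifs at hω₁ <;> norm_num at hω₁
end
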